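/- Let p ≥ 1 and n ≥ 0 be integers, A a p×p real matrix, Σ_w and Σ_{x₀} p×p real positive definite matrices, and D > 0. Define δ_n = λ_max(Σ_{x₀})/(n+1) and ε_n = (1/(n+1))·[ (p/2)·log( (λ_max(A·Aᵀ)·D + trace(Σ_w)) / p ) − (1/2)·log det Σ_{x₀} ]. Let P₀, …, P_n be p×p real positive definite matrices satisfying P₀ ⪯ Σ_{x₀}, P_t ⪯ A·P_{t−1}·Aᵀ + Σ_w for t = 1, …, n, and trace(P_t) ≤ D for t = 0, …, n, and set P̄ = (1/(n+1))·∑_{t=0}^{n} P_t. Then: (i) P̄ is positive definite, trace(P̄) ≤ D, and P̄ ⪯ A·P̄·Aᵀ + Σ_w + δ_n·I_p; and (ii) (1/(n+1))·[ (1/2)·log det Σ_{x₀} − (1/2)·log det P₀ + ∑_{t=1}^{n} ( (1/2)·log det(A·P_{t−1}·Aᵀ + Σ_w) − (1/2)·log det P_t ) ] ≥ (1/2)·log det(A·P̄·Aᵀ + Σ_w) − (1/2)·log det P̄ − ε_n. -/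

import Mathlib

open Matrix Finset

/-- The largest eigenvalue of a Hermitian real matrix. -/
noncomputable def eigMax {p : ℕ} (M : Matrix (Fin p) (Fin p) ℝ) (hM : M.IsHermitian) : ℝ :=
  ⨆ i, hM.eigenvalues i

lemma isHermitian_mul_transpose_self_real {p : ℕ} (A : Matrix (Fin p) (Fin p) ℝ) :
    (A * Aᵀ).IsHermitian := by
  rw [← conjTranspose_eq_transpose_of_trivial]
  exact isHermitian_mul_conjTranspose_self A

/-!
Write `S(P) = A P Aᵀ + W` and `Π(P) = P - P Aᵀ S(P)⁻¹ A P`, the covariance of `x` given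
`A x + w`. Two Schur complements of the block matrix `[S(P), A P; P Aᵀ, P]` give
`det P · det W = det S(P) · det Π(P)`, so `log det S(P) - log det P = log det W - log det Π(P)`.
Completing the square shows that `Π(P)` is the minimum over gains `K` of
`(1 - K A) P (1 - K A)ᵀ + K W Kᵀ`, which is affine in `P`; hence `Π` is concave in the Loewner
order, and since `log det` is concave and monotone, `P ↦ log det S(P) - log det P` is convex.
Jensen's inequality at `P̄` then bounds the telescoped left-hand side from below, up to the
boundary terms `log det Σ_{x₀}` and `-log det S(P_n)`; by AM–GM on the eigenvalues,
`log det S(P_n) ≤ p log (tr S(P_n) / p)`, and `tr S(P_n) ≤ λ_max(A Aᵀ) D + tr Σ_w`.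
The Loewner bound on `P̄` comes from summing `P_t ⪯ S(P_{t-1})` and `P₀ ⪯ Σ_{x₀} ⪯ λ_max(Σ_{x₀}) I`.
-/

open scoped MatrixOrder

namespace Matrix

section

lemma convex_setOf_posDef {n : Type*} : Convex ℝ {X : Matrix n n ℝ | X.PosDef} := by
  intro X hX Y hY a b ha hb hab
  rcases ha.eq_or_lt with rfl | ha
  · simpa [show b = 1 by linarith] using hY
  · exact (hX.smul ha).add_posSemidef (hY.posSemidef.smul hb)

variable {m n : Type*} [Fintype m] [Fintype n]

lemma PosSemidef.mul_mul_transpose_same {P : Matrix n n ℝ} (hP : P.PosSemidef)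
    (B : Matrix m n ℝ) : (B * P * Bᵀ).PosSemidef := by
  simpa using hP.mul_mul_conjTranspose_same B

variable [DecidableEq n]

lemma PosSemidef.trace_mul_nonneg {S T : Matrix n n ℝ} (hS : S.PosSemidef) (hT : T.PosSemidef) :
    0 ≤ (S * T).trace := by
  have hRR : CFC.sqrt S * CFC.sqrt S = S := CFC.sqrt_mul_sqrt_self S hS.nonneg
  have h := (hT.mul_mul_conjTranspose_same (CFC.sqrt S)).trace_nonneg
  rwa [(nonneg_iff_posSemidef.1 (CFC.sqrt_nonneg S)).isHermitian.eq, trace_mul_cycle, hRR] at h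

lemma PosDef.log_det_le_trace_sub_card {X : Matrix n n ℝ} (hX : X.PosDef) :
    Real.log X.det ≤ X.trace - Fintype.card n := by
  rw [hX.isHermitian.det_eq_prod_eigenvalues, hX.isHermitian.trace_eq_sum_eigenvalues]
  simp only [RCLike.ofReal_real_eq_id, id]
  rw [Real.log_prod fun i _ => (hX.eigenvalues_pos i).ne']
  calc ∑ i, Real.log (hX.isHermitian.eigenvalues i)
      ≤ ∑ i, (hX.isHermitian.eigenvalues i - 1) :=
        sum_le_sum fun i _ => Real.log_le_sub_one_of_pos (hX.eigenvalues_pos i)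
    _ = _ := by simp [sum_sub_distrib]

-- The tangent plane of the concave function `log det` at `S⁻¹`.
lemma PosDef.log_det_le_trace_mul_sub {X S : Matrix n n ℝ} (hX : X.PosDef) (hS : S.PosDef) :
    Real.log X.det ≤ (S * X).trace - Real.log S.det - Fintype.card n := by
  set R := CFC.sqrt S
  have hRR : R * R = S := CFC.sqrt_mul_sqrt_self S hS.posSemidef.nonneg
  have hRX : (R * X * R).PosSemidef := by
    have h := hX.posSemidef.mul_mul_conjTranspose_same R
    rwa [(nonneg_iff_posSemidef.1 (CFC.sqrt_nonneg S)).isHermitian.eq] at h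
  have hdet : (R * X * R).det = S.det * X.det := by
    rw [det_mul, det_mul, ← hRR, det_mul]; ring
  have hRXpd : (R * X * R).PosDef := by
    rw [hRX.posDef_iff_det_ne_zero, hdet]
    exact (mul_pos hS.det_pos hX.det_pos).ne'
  have h := hRXpd.log_det_le_trace_sub_card
  rw [hdet, trace_mul_cycle, hRR, Real.log_mul hS.det_pos.ne' hX.det_pos.ne'] at h
  linarith

lemma log_det_inv (S : Matrix n n ℝ) : Real.log S⁻¹.det = -Real.log S.det := by
  rw [det_nonsing_inv, Ring.inverse_eq_inv', Real.log_inv]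

lemma concaveOn_log_det : ConcaveOn ℝ {X : Matrix n n ℝ | X.PosDef} fun X => Real.log X.det := by
  refine ⟨convex_setOf_posDef, fun X hX Y hY a b ha hb hab => ?_⟩
  have hZ : (a • X + b • Y).PosDef := convex_setOf_posDef hX hY ha hb hab
  have hX' := mul_le_mul_of_nonneg_left (hX.log_det_le_trace_mul_sub hZ.inv) ha
  have hY' := mul_le_mul_of_nonneg_left (hY.log_det_le_trace_mul_sub hZ.inv) hb
  have htr : a * ((a • X + b • Y)⁻¹ * X).trace + b * ((a • X + b • Y)⁻¹ * Y).trace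
      = Fintype.card n := by
    rw [← trace_one, ← nonsing_inv_mul _ hZ.det_pos.ne'.isUnit, mul_add, trace_add,
      mul_smul_comm, mul_smul_comm, trace_smul, trace_smul, smul_eq_mul, smul_eq_mul]
  have hsum (r : ℝ) : (a + b) * r = r := by rw [hab, one_mul]
  rw [log_det_inv _] at hX' hY'
  simp only [smul_eq_mul]
  linarith [hsum (Real.log (a • X + b • Y).det), hsum (Fintype.card n)]

lemma log_det_le_log_det_of_le {X Y : Matrix n n ℝ} (hX : X.PosDef) (hXY : X ≤ Y) :
    Real.log X.det ≤ Real.log Y.det := by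
  have hY : Y.PosDef := by simpa using hX.add_posSemidef hXY
  have h := hX.log_det_le_trace_mul_sub hY.inv
  have htr := hY.inv.posSemidef.trace_mul_nonneg hXY
  rw [mul_sub, trace_sub, nonsing_inv_mul _ hY.det_pos.ne'.isUnit, trace_one] at htr
  rw [log_det_inv _] at h
  linarith

lemma PosDef.log_det_le_card_mul_log_of_trace_le {X : Matrix n n ℝ} (hX : X.PosDef) {c : ℝ}
    (hc : X.trace ≤ c) : Real.log X.det ≤ Fintype.card n * Real.log (c / Fintype.card n) := by
  cases isEmpty_or_nonempty n
  · simp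
  set k : ℝ := (Fintype.card n : ℝ)
  have hk : 0 < k := by positivity
  have hc0 : 0 < c := hX.trace_pos.trans_le hc
  have h := hX.log_det_le_trace_mul_sub (PosDef.one.smul (div_pos hk hc0))
  rw [smul_mul, one_mul, trace_smul, det_smul, det_one, mul_one, Real.log_pow, smul_eq_mul,
    Real.log_div hk.ne' hc0.ne'] at h
  rw [Real.log_div hc0.ne' hk.ne']
  have : k / c * X.trace ≤ k := by
    calc k / c * X.trace ≤ k / c * c := by gcongr
      _ = k := div_mul_cancel₀ k hc0.ne'
  linarith

lemma trace_mul_mul_transpose_le {A P : Matrix n n ℝ} (hP : P.PosSemidef) {μ : ℝ}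
    (hA : Aᵀ * A ≤ μ • (1 : Matrix n n ℝ)) : (A * P * Aᵀ).trace ≤ μ * P.trace := by
  have h := (le_iff.1 hA).trace_mul_nonneg hP
  rw [sub_mul, trace_sub, smul_mul, one_mul, trace_smul, smul_eq_mul] at h
  rw [trace_mul_cycle]
  linarith

end

section

variable {m n : Type*} [Fintype m] [Fintype n]
  {A : Matrix m n ℝ} {W : Matrix m m ℝ} {P : Matrix n n ℝ}

lemma posDef_mul_mul_transpose_add (A : Matrix m n ℝ) (hP : P.PosSemidef) (hW : W.PosDef) :
    (A * P * Aᵀ + W).PosDef :=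
  PosDef.posSemidef_add (hP.mul_mul_transpose_same A) hW

variable [DecidableEq m] [DecidableEq n]

/-- The covariance of `x` given `A x + w`, for independent centred Gaussian vectors `x` and `w`
with covariances `P` and `W`. -/
noncomputable def posteriorCov (A : Matrix m n ℝ) (W : Matrix m m ℝ) (P : Matrix n n ℝ) :
    Matrix n n ℝ :=
  P - P * Aᵀ * (A * P * Aᵀ + W)⁻¹ * A * P

lemma gain_sub_posteriorCov (hP : P.PosSemidef) (hW : W.PosDef) (K : Matrix n m ℝ) :
    (1 - K * A) * P * (1 - K * A)ᵀ + K * W * Kᵀ - posteriorCov A W P =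
      (K - P * Aᵀ * (A * P * Aᵀ + W)⁻¹) * (A * P * Aᵀ + W) *
        (K - P * Aᵀ * (A * P * Aᵀ + W)⁻¹)ᵀ := by
  have hS := posDef_mul_mul_transpose_add A hP hW
  have hSu : IsUnit (A * P * Aᵀ + W).det := hS.det_pos.ne'.isUnit
  have hPt : Pᵀ = P := by simpa using hP.isHermitian.eq
  have hSt : ((A * P * Aᵀ + W)⁻¹)ᵀ = (A * P * Aᵀ + W)⁻¹ := by
    rw [transpose_nonsing_inv]; simpa using congrArg (·⁻¹) hS.isHermitian.eq
  set S := A * P * Aᵀ + W with hS_def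
  simp only [transpose_sub, transpose_mul, transpose_one, transpose_transpose, hSt, hPt]
  simp only [posteriorCov, Matrix.sub_mul, Matrix.mul_sub, Matrix.mul_assoc, Matrix.one_mul,
    Matrix.mul_one, mul_nonsing_inv_cancel_left _ _ hSu, nonsing_inv_mul_cancel_left _ _ hSu]
  rw [hS_def]
  simp only [Matrix.add_mul, Matrix.mul_add, Matrix.mul_assoc]
  abel

lemma posteriorCov_le (hP : P.PosSemidef) (hW : W.PosDef) (K : Matrix n m ℝ) :
    posteriorCov A W P ≤ (1 - K * A) * P * (1 - K * A)ᵀ + K * W * Kᵀ := by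
  rw [le_iff, gain_sub_posteriorCov hP hW]
  exact (posDef_mul_mul_transpose_add A hP hW).posSemidef.mul_mul_transpose_same _

lemma posteriorCov_eq (hP : P.PosSemidef) (hW : W.PosDef) :
    posteriorCov A W P =
      (1 - P * Aᵀ * (A * P * Aᵀ + W)⁻¹ * A) * P * (1 - P * Aᵀ * (A * P * Aᵀ + W)⁻¹ * A)ᵀ +
        P * Aᵀ * (A * P * Aᵀ + W)⁻¹ * W * (P * Aᵀ * (A * P * Aᵀ + W)⁻¹)ᵀ := by
  have h := gain_sub_posteriorCov (A := A) hP hW (P * Aᵀ * (A * P * Aᵀ + W)⁻¹)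
  rw [sub_self, Matrix.zero_mul, Matrix.zero_mul] at h
  exact (sub_eq_zero.1 h).symm

lemma PosSemidef.posteriorCov (hP : P.PosSemidef) (hW : W.PosDef) :
    (posteriorCov A W P).PosSemidef := by
  rw [posteriorCov_eq hP hW]
  exact (hP.mul_mul_transpose_same _).add (hW.posSemidef.mul_mul_transpose_same _)

lemma det_mul_det_eq_det_mul_det_posteriorCov (hP : P.PosDef) (hW : W.PosDef) :
    P.det * W.det = (A * P * Aᵀ + W).det * (posteriorCov A W P).det := by
  have hS := posDef_mul_mul_transpose_add A hP.posSemidef hW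
  let := P.invertibleOfIsUnitDet hP.det_pos.ne'.isUnit
  let := (A * P * Aᵀ + W).invertibleOfIsUnitDet hS.det_pos.ne'.isUnit
  have hW_eq : A * P * Aᵀ + W - A * P * ⅟P * (P * Aᵀ) = W := by
    rw [invOf_eq_nonsing_inv, Matrix.mul_assoc (A * P), nonsing_inv_mul_cancel_left _ _
      hP.det_pos.ne'.isUnit]
    abel
  have hPost_eq : P - P * Aᵀ * ⅟(A * P * Aᵀ + W) * (A * P) = posteriorCov A W P := by
    rw [invOf_eq_nonsing_inv, posteriorCov, Matrix.mul_assoc _ A P]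
  have h₂₂ := det_fromBlocks₂₂ (A * P * Aᵀ + W) (A * P) (P * Aᵀ) P
  have h₁₁ := det_fromBlocks₁₁ (A * P * Aᵀ + W) (A * P) (P * Aᵀ) P
  rw [hW_eq] at h₂₂
  rw [hPost_eq] at h₁₁
  exact h₂₂.symm.trans h₁₁

lemma PosDef.posteriorCov (hP : P.PosDef) (hW : W.PosDef) : (posteriorCov A W P).PosDef := by
  rw [(hP.posSemidef.posteriorCov hW).posDef_iff_det_ne_zero]
  intro h
  have := det_mul_det_eq_det_mul_det_posteriorCov (A := A) hP hW
  rw [h, mul_zero] at this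
  exact (mul_pos hP.det_pos hW.det_pos).ne' this

lemma smul_add_smul_posteriorCov_le {X Y : Matrix n n ℝ} (hX : X.PosSemidef) (hY : Y.PosSemidef)
    (hW : W.PosDef) {a b : ℝ} (ha : 0 ≤ a) (hb : 0 ≤ b) (hab : a + b = 1) :
    a • posteriorCov A W X + b • posteriorCov A W Y ≤ posteriorCov A W (a • X + b • Y) := by
  set K := (a • X + b • Y) * Aᵀ * (A * (a • X + b • Y) * Aᵀ + W)⁻¹
  rw [posteriorCov_eq ((hX.smul ha).add (hY.smul hb)) hW]
  calc a • posteriorCov A W X + b • posteriorCov A W Y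
      ≤ a • ((1 - K * A) * X * (1 - K * A)ᵀ + K * W * Kᵀ) +
          b • ((1 - K * A) * Y * (1 - K * A)ᵀ + K * W * Kᵀ) := by
        gcongr
        exacts [posteriorCov_le hX hW K, posteriorCov_le hY hW K]
    _ = (1 - K * A) * (a • X + b • Y) * (1 - K * A)ᵀ + K * W * Kᵀ := by
        obtain rfl : b = 1 - a := by linarith
        simp only [Matrix.mul_add, Matrix.add_mul, Matrix.mul_smul, Matrix.smul_mul]
        module

lemma log_det_mul_mul_transpose_add_sub_log_det (hP : P.PosDef) (hW : W.PosDef) :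
    Real.log (A * P * Aᵀ + W).det - Real.log P.det =
      Real.log W.det - Real.log (posteriorCov A W P).det := by
  have h := congrArg Real.log (det_mul_det_eq_det_mul_det_posteriorCov (A := A) hP hW)
  rw [Real.log_mul hP.det_pos.ne' hW.det_pos.ne',
    Real.log_mul (posDef_mul_mul_transpose_add A hP.posSemidef hW).det_pos.ne'
      (hP.posteriorCov hW).det_pos.ne'] at h
  linarith

theorem convexOn_log_det_mul_mul_transpose_add_sub_log_det (A : Matrix m n ℝ) (hW : W.PosDef) :
    ConvexOn ℝ {P : Matrix n n ℝ | P.PosDef}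
      fun P => Real.log (A * P * Aᵀ + W).det - Real.log P.det := by
  refine ⟨convex_setOf_posDef, fun X (hX : X.PosDef) Y (hY : Y.PosDef) a b ha hb hab => ?_⟩
  have hZ : (a • X + b • Y).PosDef := convex_setOf_posDef hX hY ha hb hab
  have hPostX : (posteriorCov A W X).PosDef := hX.posteriorCov hW
  have hPostY : (posteriorCov A W Y).PosDef := hY.posteriorCov hW
  have hconc := concaveOn_log_det.2 hPostX hPostY ha hb hab
  have hmono := log_det_le_log_det_of_le (convex_setOf_posDef hPostX hPostY ha hb hab)
    (smul_add_smul_posteriorCov_le (A := A) hX.posSemidef hY.posSemidef hW ha hb hab)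
  have hsum : (a + b) * Real.log W.det = Real.log W.det := by rw [hab, one_mul]
  simp only [smul_eq_mul] at hconc ⊢
  rw [log_det_mul_mul_transpose_add_sub_log_det hX hW,
    log_det_mul_mul_transpose_add_sub_log_det hY hW,
    log_det_mul_mul_transpose_add_sub_log_det hZ hW]
  linarith

lemma log_det_mul_mul_transpose_add_sub_log_det_average_le (A : Matrix m n ℝ) (hW : W.PosDef)
    {ι : Type*} {s : Finset ι} (hs : s.Nonempty) {P : ι → Matrix n n ℝ}
    (hP : ∀ t ∈ s, (P t).PosDef) :
    Real.log (A * ((#s : ℝ)⁻¹ • ∑ t ∈ s, P t) * Aᵀ + W).det -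
        Real.log ((#s : ℝ)⁻¹ • ∑ t ∈ s, P t).det ≤
      (#s : ℝ)⁻¹ * ∑ t ∈ s, (Real.log (A * P t * Aᵀ + W).det - Real.log (P t).det) := by
  have h := (convexOn_log_det_mul_mul_transpose_add_sub_log_det A hW).map_sum_le
    (w := fun _ => (#s : ℝ)⁻¹) (fun _ _ => by positivity) (by simp [hs.card_ne_zero]) hP
  simpa only [smul_eq_mul, ← smul_sum, ← mul_sum] using h

end

end Matrix

section EigMax

variable {p : ℕ}

lemma le_eigMax_of_mem_spectrum {M : Matrix (Fin p) (Fin p) ℝ} (hM : M.IsHermitian) {x : ℝ}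
    (hx : x ∈ spectrum ℝ M) : x ≤ eigMax M hM := by
  rw [hM.spectrum_real_eq_range_eigenvalues] at hx
  obtain ⟨i, rfl⟩ := hx
  exact le_ciSup (Set.finite_range _).bddAbove i

lemma le_eigMax_smul_one {M : Matrix (Fin p) (Fin p) ℝ} (hM : M.IsHermitian) :
    M ≤ eigMax M hM • (1 : Matrix (Fin p) (Fin p) ℝ) := by
  rw [← Algebra.algebraMap_eq_smul_one]
  exact le_algebraMap_of_spectrum_le (fun x hx => le_eigMax_of_mem_spectrum hM hx) hM

lemma eigMax_mul_transpose_self_nonneg (A : Matrix (Fin p) (Fin p) ℝ) :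
    0 ≤ eigMax (A * Aᵀ) (isHermitian_mul_transpose_self_real A) := by
  have hAA : (A * Aᵀ).PosSemidef := by simpa using posSemidef_self_mul_conjTranspose A
  exact Real.iSup_nonneg hAA.eigenvalues_nonneg

-- `AᵀA` and `AAᵀ` have the same nonzero eigenvalues.
lemma transpose_mul_self_le_eigMax_smul_one (A : Matrix (Fin p) (Fin p) ℝ) :
    Aᵀ * A ≤
      eigMax (A * Aᵀ) (isHermitian_mul_transpose_self_real A) • (1 : Matrix (Fin p) (Fin p) ℝ) := by
  have hAtA : (Aᵀ * A).PosSemidef := by simpa using posSemidef_conjTranspose_mul_self A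
  rw [← Algebra.algebraMap_eq_smul_one]
  refine le_algebraMap_of_spectrum_le (fun x hx => ?_) hAtA.isHermitian
  rcases eq_or_ne x 0 with rfl | hx0
  · exact eigMax_mul_transpose_self_nonneg A
  · have hx' : x ∈ spectrum ℝ (Aᵀ * A) \ {0} := ⟨hx, hx0⟩
    rw [spectrum.nonzero_mul_comm] at hx'
    exact le_eigMax_of_mem_spectrum _ hx'.1

lemma trace_mul_mul_transpose_add_le {A P : Matrix (Fin p) (Fin p) ℝ}
    (W : Matrix (Fin p) (Fin p) ℝ) (hP : P.PosSemidef) {D : ℝ} (hD : P.trace ≤ D) :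
    (A * P * Aᵀ + W).trace ≤
      eigMax (A * Aᵀ) (isHermitian_mul_transpose_self_real A) * D + W.trace := by
  rw [trace_add]
  gcongr
  exact (trace_mul_mul_transpose_le hP (transpose_mul_self_le_eigMax_smul_one A)).trans
    (mul_le_mul_of_nonneg_left hD (eigMax_mul_transpose_self_nonneg A))

end EigMax

lemma average_le_of_le_recursion {n : Type*} [Fintype n] [DecidableEq n] (A W X₀ : Matrix n n ℝ)
    (P : ℕ → Matrix n n ℝ) (N : ℕ) (h₀ : P 0 ≤ X₀)
    (hrec : ∀ t < N, P (t + 1) ≤ A * P t * Aᵀ + W) (hN : 0 ≤ A * P N * Aᵀ + W) :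
    ((N : ℝ) + 1)⁻¹ • ∑ t ∈ range (N + 1), P t ≤
      A * (((N : ℝ) + 1)⁻¹ • ∑ t ∈ range (N + 1), P t) * Aᵀ + W + ((N : ℝ) + 1)⁻¹ • X₀ := by
  have hm : ((N : ℝ) + 1) ≠ 0 := by positivity
  have hsum : ∑ t ∈ range (N + 1), P t ≤ X₀ + ∑ t ∈ range (N + 1), (A * P t * Aᵀ + W) := by
    calc ∑ t ∈ range (N + 1), P t = ∑ t ∈ range N, P (t + 1) + P 0 := sum_range_succ' _ _
      _ ≤ ∑ t ∈ range N, (A * P t * Aᵀ + W) + X₀ :=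
        add_le_add (sum_le_sum fun t ht => hrec t (mem_range.1 ht)) h₀
      _ ≤ X₀ + ∑ t ∈ range (N + 1), (A * P t * Aᵀ + W) := by
        rw [add_comm, sum_range_succ]
        exact add_le_add_right (le_add_of_nonneg_right hN) X₀
  have hmean : ∑ t ∈ range (N + 1), (A * P t * Aᵀ + W) =
      ((N : ℝ) + 1) • (A * (((N : ℝ) + 1)⁻¹ • ∑ t ∈ range (N + 1), P t) * Aᵀ + W) := by
    rw [sum_add_distrib, ← Finset.sum_mul, ← Finset.mul_sum, sum_const, card_range, smul_add,
      mul_smul_comm, smul_mul_assoc, smul_smul, mul_inv_cancel₀ hm, one_smul,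
      ← Nat.cast_smul_eq_nsmul ℝ]
    push_cast
    rfl
  calc ((N : ℝ) + 1)⁻¹ • ∑ t ∈ range (N + 1), P t
      ≤ ((N : ℝ) + 1)⁻¹ • (X₀ + ∑ t ∈ range (N + 1), (A * P t * Aᵀ + W)) :=
        smul_le_smul_of_nonneg_left hsum (by positivity)
    _ = _ := by rw [hmean, smul_add, smul_smul, inv_mul_cancel₀ hm, one_smul, add_comm]

lemma sum_Icc_pred_sub_eq {G : Type*} [AddCommGroup G] (f g : ℕ → G) (n : ℕ) :
    ∑ t ∈ Icc 1 n, (f (t - 1) - g t) = ∑ t ∈ range (n + 1), (f t - g t) - f n + g 0 := by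
  induction n with
  | zero => simp
  | succ n ih =>
    rw [sum_Icc_succ_top (by omega), ih, Nat.add_sub_cancel, sum_range_succ _ (n + 1)]
    abel

theorem stmt_11_general {p : ℕ} (n : ℕ)
    (A Sw Sx0 : Matrix (Fin p) (Fin p) ℝ) (hSw : Sw.PosDef) (hSx0 : Sx0.PosDef)
    (D : ℝ)
    (P : ℕ → Matrix (Fin p) (Fin p) ℝ) (hP : ∀ t ≤ n, (P t).PosDef)
    (h0 : (Sx0 - P 0).PosSemidef)
    (hrec : ∀ t, 1 ≤ t → t ≤ n → (A * P (t - 1) * Aᵀ + Sw - P t).PosSemidef)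
    (htr : ∀ t ≤ n, (P t).trace ≤ D)
    (Pbar : Matrix (Fin p) (Fin p) ℝ)
    (hPbar : Pbar = ((n : ℝ) + 1)⁻¹ • ∑ t ∈ Finset.range (n + 1), P t)
    (δ ε : ℝ)
    (hδ : δ = eigMax Sx0 hSx0.1 / ((n : ℝ) + 1))
    (hε : ε = ((n : ℝ) + 1)⁻¹ *
      (((p : ℝ) / 2) *
          Real.log ((eigMax (A * Aᵀ) (isHermitian_mul_transpose_self_real A) * D + Sw.trace) /
            (p : ℝ)) -
        (1 / 2) * Real.log Sx0.det)) :
    Pbar.PosDef ∧ Pbar.trace ≤ D ∧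
      (A * Pbar * Aᵀ + Sw + δ • (1 : Matrix (Fin p) (Fin p) ℝ) - Pbar).PosSemidef ∧
      ((n : ℝ) + 1)⁻¹ *
          ((1 / 2) * Real.log Sx0.det - (1 / 2) * Real.log (P 0).det +
            ∑ t ∈ Finset.Icc 1 n,
              ((1 / 2) * Real.log (A * P (t - 1) * Aᵀ + Sw).det -
                (1 / 2) * Real.log (P t).det)) ≥
        (1 / 2) * Real.log (A * Pbar * Aᵀ + Sw).det - (1 / 2) * Real.log Pbar.det - ε := by
  have hm : (0 : ℝ) < n + 1 := by positivity
  have hPs : ∀ t ∈ range (n + 1), (P t).PosDef := fun t ht =>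
    hP t (by simpa [Nat.lt_succ_iff] using ht)
  have hSn := posDef_mul_mul_transpose_add A (hP n le_rfl).posSemidef hSw
  refine ⟨?_, ?_, ?_, ?_⟩
  · rw [hPbar]
    exact (posDef_sum nonempty_range_add_one hPs).smul (inv_pos.2 hm)
  · rw [hPbar, trace_smul, trace_sum, smul_eq_mul, inv_mul_le_iff₀ hm]
    calc ∑ t ∈ range (n + 1), (P t).trace ≤ ∑ t ∈ range (n + 1), D :=
          sum_le_sum fun t ht => htr t (by simpa [Nat.lt_succ_iff] using ht)
      _ = (n + 1) * D := by simp
  · have h := average_le_of_le_recursion A Sw Sx0 P n h0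
      (fun t ht => le_iff.2 (by simpa using hrec (t + 1) (by omega) (by omega)))
      hSn.posSemidef.nonneg
    rw [← hPbar] at h
    refine le_iff.1 (h.trans (add_le_add_right ?_ _))
    rw [hδ, div_eq_inv_mul, mul_smul]
    exact smul_le_smul_of_nonneg_left (le_eigMax_smul_one hSx0.1) (inv_nonneg.2 hm.le)
  · have hJensen := log_det_mul_mul_transpose_add_sub_log_det_average_le A hSw
      nonempty_range_add_one hPs
    simp only [card_range, Nat.cast_add, Nat.cast_one, ← hPbar] at hJensen
    have hlast := hSn.log_det_le_card_mul_log_of_trace_le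
      (trace_mul_mul_transpose_add_le Sw (hP n le_rfl).posSemidef (htr n le_rfl))
    simp only [Fintype.card_fin] at hlast
    simp only [← mul_sub, ← mul_sum]
    rw [sum_Icc_pred_sub_eq (fun t => Real.log (A * P t * Aᵀ + Sw).det)
      (fun t => Real.log (P t).det), hε]
    have := mul_le_mul_of_nonneg_left hlast (inv_nonneg.2 hm.le)
    linarith

/-- Feasibility and lower-bound estimate for the time-average `P̄` of a feasible sequence
of the finite-horizon Gaussian SRD program (Lemma 4 of the paper). -/
theorem stmt_11 {p : ℕ} (hp : 1 ≤ p) (n : ℕ)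
    (A Sw Sx0 : Matrix (Fin p) (Fin p) ℝ) (hSw : Sw.PosDef) (hSx0 : Sx0.PosDef)
    (D : ℝ) (hD : D > 0)
    (P : ℕ → Matrix (Fin p) (Fin p) ℝ) (hP : ∀ t ≤ n, (P t).PosDef)
    (h0 : (Sx0 - P 0).PosSemidef)
    (hrec : ∀ t, 1 ≤ t → t ≤ n → (A * P (t - 1) * Aᵀ + Sw - P t).PosSemidef)
    (htr : ∀ t ≤ n, (P t).trace ≤ D)
    (Pbar : Matrix (Fin p) (Fin p) ℝ)
    (hPbar : Pbar = ((n : ℝ) + 1)⁻¹ • ∑ t ∈ Finset.range (n + 1), P t)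
    (δ ε : ℝ)
    (hδ : δ = eigMax Sx0 hSx0.1 / ((n : ℝ) + 1))
    (hε : ε = ((n : ℝ) + 1)⁻¹ *
      (((p : ℝ) / 2) *
          Real.log ((eigMax (A * Aᵀ) (isHermitian_mul_transpose_self_real A) * D + Sw.trace) /
            (p : ℝ)) -
        (1 / 2) * Real.log Sx0.det)) :
    Pbar.PosDef ∧ Pbar.trace ≤ D ∧
      (A * Pbar * Aᵀ + Sw + δ • (1 : Matrix (Fin p) (Fin p) ℝ) - Pbar).PosSemidef ∧
      ((n : ℝ) + 1)⁻¹ *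
          ((1 / 2) * Real.log Sx0.det - (1 / 2) * Real.log (P 0).det +
            ∑ t ∈ Finset.Icc 1 n,
              ((1 / 2) * Real.log (A * P (t - 1) * Aᵀ + Sw).det -
                (1 / 2) * Real.log (P t).det)) ≥
        (1 / 2) * Real.log (A * Pbar * Aᵀ + Sw).det - (1 / 2) * Real.log Pbar.det - ε :=
  stmt_11_general n A Sw Sx0 hSw hSx0 D P hP h0 hrec htr Pbar hPbar δ ε hδ hε
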